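/- Let q be a unimodular symmetric bilinear form on a free R-module N and b ∈ O(q,R) be R-semisimple. Then there is a b-invariant q-orthogonal decomposition N = N_+ ⊕ N_- ⊕ N_* such that b acts as +1 on N_+, as −1 on N_-, and b_* = b|N_* satisfies b_* − b_*^{-1} ∈ GL(N_*). -/

import Mathlib

/-- `R` is either a field of characteristic `0`, or the ring of integers of a `p`-adic
field with odd residue characteristic. -/
def IsPaperRing (R : Type*) [CommRing R] [IsDomain R] [IsLocalRing R] : Prop :=
  (IsField R ∧ CharZero R) ∨
  (IsDiscreteValuationRing R ∧ IsAdicComplete (IsLocalRing.maximalIdeal R) R ∧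
    Finite (IsLocalRing.ResidueField R) ∧ ringChar (IsLocalRing.ResidueField R) ≠ 2)

/-- `g` is `R`-semisimple. -/
def IsRSemisimple (R : Type*) [CommRing R] [IsLocalRing R] {M : Type*} [AddCommGroup M]
    [Module R M] (g : M ≃ₗ[R] M) : Prop :=
  (IsField R ∧ Module.End.IsSemisimple (g : M →ₗ[R] M)) ∨
  (∃ k : ℕ, 0 < k ∧ Nat.Coprime k (ringChar (IsLocalRing.ResidueField R)) ∧ g ^ k = 1)

/-!
Put `f = b² - 1`. Everything follows from `N = ker f ⊕ range f`: as `2` is a unit, `ker f` is the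
sum of the `±1`-eigenspaces of `b`, and `b - b⁻¹ = b⁻¹ ∘ f` is bijective on `range f`.
Orthogonality only uses that `b` preserves `q`: if `b² x = x` then
`q x (b² w - w) = q (b² x) (b² w) - q x w = 0`, and `q x y = -q x y` when `b x = x`, `b y = -y`.
The splitting `N = ker f ⊕ range f` holds over a field because `f` is a polynomial in the
semisimple `b`, and when `b ^ k = 1` with `k` a unit because `X - 1` and `1 + X + ⋯ + X ^ (k - 1)`
are coprime and their product kills `b²`.
-/

open Polynomial LinearMap

theorem IsLocalRing.isUnit_natCast_of_coprime_ringChar {R : Type*} [CommRing R] [IsLocalRing R]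
    {n : ℕ} (hn : n.Coprime (ringChar (ResidueField R))) : IsUnit (n : R) := by
  have hres : (n : ResidueField R) ≠ 0 := by
    rw [Ne, CharP.cast_eq_zero_iff _ (ringChar _)]
    exact fun hdvd => CharP.ringChar_ne_one (hn.symm.eq_one_of_dvd hdvd)
  simpa using (isUnit_map_iff (residue R) _).mp hres.isUnit

theorem IsPaperRing.isUnit_two {R : Type*} [CommRing R] [IsDomain R] [IsLocalRing R]
    (hR : IsPaperRing R) : IsUnit (2 : R) := by
  rcases hR with ⟨hfield, _⟩ | ⟨-, -, _, hchar⟩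
  · let := hfield.toField
    exact two_ne_zero.isUnit
  · have hp := CharP.char_is_prime (IsLocalRing.ResidueField R) _
    exact_mod_cast IsLocalRing.isUnit_natCast_of_coprime_ringChar
      ((Nat.coprime_primes Nat.prime_two hp).mpr hchar.symm)

theorem Polynomial.isCoprime_X_sub_one_geom_sum {R : Type*} [CommRing R] {k : ℕ}
    (hk : IsUnit (k : R)) : IsCoprime (X - 1 : R[X]) (∑ i ∈ Finset.range k, X ^ i) := by
  obtain ⟨s, hs⟩ := X_sub_C_dvd_sub_C_eval (a := (1 : R)) (p := ∑ i ∈ Finset.range k, X ^ i)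
  have heval : (∑ i ∈ Finset.range k, X ^ i : R[X]).eval 1 = k := by simp
  rw [heval, sub_eq_iff_eq_add, C_1] at hs
  rw [hs, add_comm, ← one_mul (C (k : R))]
  exact ((isCoprime_mul_unit_right_right (isUnit_C.mpr hk) _ _).mpr isCoprime_one_right)
    |>.add_mul_left_right s

theorem Polynomial.isCoprime_X_sub_one_X_add_one {R : Type*} [CommRing R]
    (h2 : IsUnit (2 : R)) : IsCoprime (X - 1 : R[X]) (X + 1) := by
  obtain ⟨u, hu⟩ := h2.exists_left_inv
  have hC : C u * 2 = 1 := by rw [← C_ofNat, ← C_mul, hu, C_1]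
  exact ⟨-C u, C u, by linear_combination hC⟩

theorem Polynomial.isCompl_ker_range_aeval_of_isCoprime {R M : Type*} [CommRing R]
    [AddCommGroup M] [Module R M] (f : Module.End R M) {p r : R[X]} (hpr : IsCoprime p r)
    (hf : aeval f (p * r) = 0) : IsCompl (ker (aeval f p)) (range (aeval f p)) := by
  have hrange : range (aeval f p) = ker (aeval f r) := by
    refine le_antisymm ?_ fun v hv => ?_
    · rintro _ ⟨v, rfl⟩
      rw [mem_ker, ← Module.End.mul_apply, ← aeval_mul, mul_comm, hf, LinearMap.zero_apply]
    · obtain ⟨u, w, huw⟩ := hpr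
      refine ⟨aeval f u v, ?_⟩
      rw [mul_comm u] at huw
      simpa [aeval_mul, mem_ker.mp hv] using congr($(congrArg (aeval f) huw) v)
  rw [hrange]
  refine ⟨disjoint_ker_aeval_of_isCoprime f hpr, codisjoint_iff.mpr ?_⟩
  rw [sup_ker_aeval_eq_ker_aeval_mul_of_coprime f hpr, hf, ker_zero]

theorem Module.End.IsSemisimple.isCompl_ker_range {K V : Type*} [Field K] [AddCommGroup V]
    [Module K V] [FiniteDimensional K V] {f : Module.End K V} (hf : f.IsSemisimple) :
    IsCompl (ker f) (range f) := by
  have hker : ker f ∈ f.invtSubmodule :=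
    (Module.End.mem_invtSubmodule f).mpr fun x hx => by simp [mem_ker.mp hx]
  obtain ⟨W, hWf, hW⟩ := Module.End.isSemisimple_iff.mp hf _ hker
  have hle : range f ≤ W := by
    rintro _ ⟨x, rfl⟩
    obtain ⟨k, hk, w, hw, rfl⟩ :=
      Submodule.mem_sup.mp (hW.sup_eq_top ▸ Submodule.mem_top (x := x))
    rw [map_add, mem_ker.mp hk, zero_add]
    exact (Module.End.mem_invtSubmodule f).mp hWf hw
  have hrank :=
    (finrank_range_add_finrank_ker f).trans (Submodule.finrank_add_eq_of_isCompl hW).symm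
  rwa [Submodule.eq_of_le_of_finrank_eq hle (by omega)]

theorem LinearMap.bijOn_range_of_isCompl_ker_range {R M : Type*} [CommRing R]
    [AddCommGroup M] [Module R M] {f : Module.End R M} (hf : IsCompl (ker f) (range f)) :
    Set.BijOn f (range f) (range f) := by
  refine ⟨fun x _ => mem_range_self f x, fun x hx y hy hxy => ?_, ?_⟩
  · have hmem : x - y ∈ ker f := by simp [mem_ker, hxy]
    exact sub_eq_zero.mp (Submodule.disjoint_def.mp hf.disjoint _ hmem (sub_mem hx hy))
  · rintro _ ⟨x, rfl⟩
    obtain ⟨k, hk, w, hw, rfl⟩ :=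
      Submodule.mem_sup.mp (hf.sup_eq_top ▸ Submodule.mem_top (x := x))
    exact ⟨w, hw, by rw [map_add, mem_ker.mp hk, zero_add]⟩

theorem DirectSum.isInternal_fin_three {R M : Type*} [Ring R] [AddCommGroup M] [Module R M]
    {A B C : Submodule R M} (hAB : Disjoint A B) (h : IsCompl (A ⊔ B) C) :
    DirectSum.IsInternal ![A, B, C] := by
  rw [DirectSum.isInternal_submodule_iff_iSupIndep_and_iSup_eq_top, iSupIndep_fin_three,
    iSup_fin_three]
  refine ⟨⟨hAB.disjoint_sup_right_of_disjoint_sup_left h.disjoint, ?_, h.disjoint.symm⟩,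
    h.sup_eq_top⟩
  rw [sup_comm]
  exact hAB.symm.disjoint_sup_right_of_disjoint_sup_left (sup_comm A B ▸ h.disjoint)

section

variable {R N : Type*} [CommRing R] [AddCommGroup N] [Module R N]

theorem Module.End.ker_sub_one_sup_ker_add_one (f : Module.End R N) (h2 : IsUnit (2 : R)) :
    ker (f - 1) ⊔ ker (f + 1) = ker (f ^ 2 - 1) := by
  have := sup_ker_aeval_eq_ker_aeval_mul_of_coprime f (isCoprime_X_sub_one_X_add_one h2)
  rw [show ((X - 1) * (X + 1) : R[X]) = X ^ 2 - 1 by ring] at this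
  simpa using this

theorem Module.End.disjoint_ker_sub_one_ker_add_one (f : Module.End R N) (h2 : IsUnit (2 : R)) :
    Disjoint (ker (f - 1)) (ker (f + 1)) := by
  simpa using disjoint_ker_aeval_of_isCoprime f (isCoprime_X_sub_one_X_add_one h2)

theorem LinearEquiv.isCompl_ker_range_sq_sub_one_of_pow_eq_one (b : N ≃ₗ[R] N) {k : ℕ}
    (hk : IsUnit (k : R)) (hbk : b ^ k = 1) :
    IsCompl (ker ((b : Module.End R N) ^ 2 - 1)) (range ((b : Module.End R N) ^ 2 - 1)) := by
  have hβk : (b : Module.End R N) ^ k = 1 := by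
    ext x
    simpa [Module.End.pow_apply, LinearEquiv.pow_apply] using congr($hbk x)
  have hannihil :
      aeval ((b : Module.End R N) ^ 2) ((X - 1 : R[X]) * ∑ i ∈ Finset.range k, X ^ i) = 0 := by
    rw [mul_geom_sum, map_sub, map_pow, aeval_X, map_one, ← pow_mul, mul_comm, pow_mul, hβk,
      one_pow, sub_self]
  simpa using isCompl_ker_range_aeval_of_isCoprime _ (isCoprime_X_sub_one_geom_sum hk) hannihil

theorem LinearEquiv.bijOn_sub_symm_range (b : N ≃ₗ[R] N)
    (hcompl : IsCompl (ker ((b : Module.End R N) ^ 2 - 1))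
      (range ((b : Module.End R N) ^ 2 - 1))) :
    Set.BijOn (fun x => b x - b.symm x) (range ((b : Module.End R N) ^ 2 - 1))
      (range ((b : Module.End R N) ^ 2 - 1)) := by
  set f := (b : Module.End R N) ^ 2 - 1
  have hsymm : Set.BijOn b.symm (range f) (range f) := by
    refine b.symm.toEquiv.bijOn fun x => ⟨?_, ?_⟩
    · rintro ⟨w, hw⟩
      rw [LinearEquiv.coe_toEquiv] at hw
      exact ⟨b w, by rw [← b.apply_symm_apply x, ← hw]; simp [f, sq]⟩
    · rintro ⟨w, rfl⟩
      exact ⟨b.symm w, by simp [f, sq]⟩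
  have hcomp : (fun x => b x - b.symm x) = b.symm ∘ f := funext fun x => by simp [f, sq]
  rw [hcomp]
  exact hsymm.comp (bijOn_range_of_isCompl_ker_range hcompl)

variable {q : N →ₗ[R] N →ₗ[R] R}

theorem apply_eq_zero_of_mem_ker_sub_one_of_mem_range_sub_one {c : Module.End R N}
    (hc : ∀ x y, q (c x) (c y) = q x y) {x y : N} (hx : x ∈ ker (c - 1))
    (hy : y ∈ range (c - 1)) : q x y = 0 := by
  obtain ⟨w, rfl⟩ := hy
  have hcx : c x = x := by simpa [sub_eq_zero] using hx
  rw [LinearMap.sub_apply, Module.End.one_apply, map_sub, ← hc x w, hcx, sub_self]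

theorem apply_eq_zero_of_mem_ker_sub_one_of_mem_ker_add_one {c : Module.End R N}
    (hc : ∀ x y, q (c x) (c y) = q x y) (h2 : IsUnit (2 : R)) {x y : N}
    (hx : x ∈ ker (c - 1)) (hy : y ∈ ker (c + 1)) : q x y = 0 := by
  have hcx : c x = x := by simpa [sub_eq_zero] using hx
  have hcy : c y = -y := eq_neg_of_add_eq_zero_left (by simpa using hy)
  have h := hc x y
  rw [hcx, hcy, map_neg] at h
  exact h2.mul_right_eq_zero.mp (by linear_combination -h)

theorem LinearEquiv.exists_orthogonal_splitting_of_isCompl {b : N ≃ₗ[R] N}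
    (hb : ∀ x y : N, q (b x) (b y) = q x y) (h2 : IsUnit (2 : R))
    (hcompl : IsCompl (ker ((b : Module.End R N) ^ 2 - 1))
      (range ((b : Module.End R N) ^ 2 - 1))) :
    ∃ Nplus Nminus Nstar : Submodule R N,
      DirectSum.IsInternal ![Nplus, Nminus, Nstar] ∧
      (∀ x ∈ Nplus, ∀ y ∈ Nminus, q x y = 0) ∧
      (∀ x ∈ Nplus, ∀ y ∈ Nstar, q x y = 0) ∧
      (∀ x ∈ Nminus, ∀ y ∈ Nstar, q x y = 0) ∧
      (∀ x ∈ Nplus, b x = x) ∧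
      (∀ x ∈ Nminus, b x = -x) ∧
      (∀ x ∈ Nstar, b x ∈ Nstar) ∧
      Set.BijOn (fun x => b x - b.symm x) (Nstar : Set N) (Nstar : Set N) := by
  set β : Module.End R N := ↑b
  have hβ2 : ∀ x y, q ((β ^ 2) x) ((β ^ 2) y) = q x y := by simp [β, sq, hb]
  have hsplit := β.ker_sub_one_sup_ker_add_one h2
  have hplus : ker (β - 1) ≤ ker (β ^ 2 - 1) := hsplit ▸ le_sup_left
  have hminus : ker (β + 1) ≤ ker (β ^ 2 - 1) := hsplit ▸ le_sup_right
  refine ⟨ker (β - 1), ker (β + 1), range (β ^ 2 - 1),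
    DirectSum.isInternal_fin_three (β.disjoint_ker_sub_one_ker_add_one h2) (hsplit ▸ hcompl),
    fun x hx y hy => apply_eq_zero_of_mem_ker_sub_one_of_mem_ker_add_one hb h2 hx hy,
    fun x hx y hy => apply_eq_zero_of_mem_ker_sub_one_of_mem_range_sub_one hβ2 (hplus hx) hy,
    fun x hx y hy => apply_eq_zero_of_mem_ker_sub_one_of_mem_range_sub_one hβ2 (hminus hx) hy,
    fun x hx => by simpa [β, sub_eq_zero] using hx,
    fun x hx => eq_neg_of_add_eq_zero_left (by simpa [β] using hx), ?_,
    b.bijOn_sub_symm_range hcompl⟩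
  rintro _ ⟨w, rfl⟩
  exact ⟨b w, by simp [β, sq]⟩

end

theorem orthogonal_plus_minus_splitting_general
    {R : Type*} [CommRing R] [IsDomain R] [IsLocalRing R] (hR : IsPaperRing R)
    {N : Type*} [AddCommGroup N] [Module R N] [Module.Finite R N]
    (q : N →ₗ[R] N →ₗ[R] R)
    (b : N ≃ₗ[R] N) (hb : ∀ x y : N, q (b x) (b y) = q x y)
    (hss : IsRSemisimple R b) :
    ∃ Nplus Nminus Nstar : Submodule R N,
      DirectSum.IsInternal ![Nplus, Nminus, Nstar] ∧
      (∀ x ∈ Nplus, ∀ y ∈ Nminus, q x y = 0) ∧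
      (∀ x ∈ Nplus, ∀ y ∈ Nstar, q x y = 0) ∧
      (∀ x ∈ Nminus, ∀ y ∈ Nstar, q x y = 0) ∧
      (∀ x ∈ Nplus, b x = x) ∧
      (∀ x ∈ Nminus, b x = -x) ∧
      (∀ x ∈ Nstar, b x ∈ Nstar) ∧
      Set.BijOn (fun x => b x - b.symm x) (Nstar : Set N) (Nstar : Set N) := by
  refine b.exists_orthogonal_splitting_of_isCompl hb hR.isUnit_two ?_
  rcases hss with ⟨hfield, hsemisimple⟩ | ⟨k, -, hk, hbk⟩
  · let := hfield.toField
    have hsq : Module.End.IsSemisimple ((b : Module.End R N) ^ 2 - 1) := by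
      have := hsemisimple.aeval (X ^ 2 - 1)
      rwa [map_sub, map_pow, aeval_X, map_one] at this
    exact hsq.isCompl_ker_range
  · exact b.isCompl_ker_range_sq_sub_one_of_pow_eq_one
      (IsLocalRing.isUnit_natCast_of_coprime_ringChar hk) hbk

/-- For an `R`-semisimple orthogonal transformation `b` of a unimodular symmetric bilinear
free module `(N, q)`, there is a `b`-invariant `q`-orthogonal decomposition
`N = N₊ ⊕ N₋ ⊕ N⋆` with `b = +1` on `N₊`, `b = −1` on `N₋`, and `b − b⁻¹` invertible
on `N⋆`. -/
theorem orthogonal_plus_minus_splitting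
    {R : Type*} [CommRing R] [IsDomain R] [IsLocalRing R] (hR : IsPaperRing R)
    {N : Type*} [AddCommGroup N] [Module R N] [Module.Free R N] [Module.Finite R N]
    (q : N →ₗ[R] N →ₗ[R] R) (hsymm : ∀ x y : N, q x y = q y x)
    (hunimod : Function.Bijective ⇑q)
    (b : N ≃ₗ[R] N) (hb : ∀ x y : N, q (b x) (b y) = q x y)
    (hss : IsRSemisimple R b) :
    ∃ Nplus Nminus Nstar : Submodule R N,
      DirectSum.IsInternal ![Nplus, Nminus, Nstar] ∧
      (∀ x ∈ Nplus, ∀ y ∈ Nminus, q x y = 0) ∧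
      (∀ x ∈ Nplus, ∀ y ∈ Nstar, q x y = 0) ∧
      (∀ x ∈ Nminus, ∀ y ∈ Nstar, q x y = 0) ∧
      (∀ x ∈ Nplus, b x = x) ∧
      (∀ x ∈ Nminus, b x = -x) ∧
      (∀ x ∈ Nstar, b x ∈ Nstar) ∧
      Set.BijOn (fun x => b x - b.symm x) (Nstar : Set N) (Nstar : Set N) :=
  orthogonal_plus_minus_splitting_general hR q b hb hss
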